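/- Let a : ℕ → ℂ be such that a(n) lies in a wedge W(θ₁,θ₂) with 0 ≤ θ₂ − θ₁ < π for all but finitely many n ≥ 1. Then the Dirichlet series Σ a(n) n^{-s} has equal abscissa of convergence and abscissa of absolute convergence. -/

import Mathlib

/-!
Rotating the wedge by its mid-angle `φ = (θ₁ + θ₂) / 2` brings every argument into
`[-(θ₂ - θ₁)/2, (θ₂ - θ₁)/2]`, so `‖z‖ cos((θ₂ - θ₁)/2) ≤ Re(e^{-iφ} z)` on the wedge, with a
positive cosine. For real `σ` the terms `a(n) n^{-σ}` stay in the wedge, so if the series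
converges at `σ`, the real parts of the rotated terms form an eventually nonnegative series with
convergent partial sums; it is therefore summable and dominates `Σ |a(n) n^{-σ}|`. Convergence on
`Re s > σ` thus gives absolute convergence at every real `σ' > σ`, hence on `Re s > σ`.
-/

open Complex Real Filter Topology

/-- The wedge `W(θ₁,θ₂) = {r·e^{iθ} : r ≥ 0, θ ∈ [θ₁,θ₂]}`. -/
def Wedge (θ₁ θ₂ : ℝ) : Set ℂ :=
  {z : ℂ | ∃ r θ : ℝ, 0 ≤ r ∧ θ₁ ≤ θ ∧ θ ≤ θ₂ ∧ z = r * Complex.exp (θ * Complex.I)}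

/-- The Dirichlet series `Σ_{n≥1} a(n) n^{-s}` converges at `s` (convergence of partial sums). -/
def DirichletConvAt (a : ℕ → ℂ) (s : ℂ) : Prop :=
  ∃ l : ℂ, Tendsto (fun N => ∑ n ∈ Finset.Icc 1 N, a n / (n : ℂ) ^ s) atTop (𝓝 l)

/-- The abscissa of convergence of `Σ a(n) n^{-s}`. -/
noncomputable def abscissaConv (a : ℕ → ℂ) : ℝ :=
  sInf {σ : ℝ | ∀ s : ℂ, σ < s.re → DirichletConvAt a s}

/-- The abscissa of absolute convergence of `Σ a(n) n^{-s}`. -/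
noncomputable def abscissaAbsConv (a : ℕ → ℂ) : ℝ :=
  sInf {σ : ℝ | ∀ s : ℂ, σ < s.re → Summable (fun n : ℕ => ‖a n / (n : ℂ) ^ s‖)}

open Finset in
theorem sum_range_succ_eq_add_sum_Icc_one {M : Type*} [AddCommMonoid M] (f : ℕ → M) (N : ℕ) :
    ∑ i ∈ range (N + 1), f i = f 0 + ∑ i ∈ Icc 1 N, f i := by
  rw [range_eq_Ico, sum_eq_sum_Ico_succ_bot N.add_one_pos, zero_add, Ico_add_one_right_eq_Icc]

theorem tendsto_sum_range_iff_tendsto_sum_Icc_one {G : Type*} [AddCommGroup G] [TopologicalSpace G]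
    [IsTopologicalAddGroup G] {f : ℕ → G} {l : G} :
    Tendsto (fun N => ∑ i ∈ Finset.range N, f i) atTop (𝓝 (f 0 + l)) ↔
      Tendsto (fun N => ∑ i ∈ Finset.Icc 1 N, f i) atTop (𝓝 l) := by
  rw [← tendsto_add_atTop_iff_nat 1]
  simp only [sum_range_succ_eq_add_sum_Icc_one]
  exact ⟨fun h => by simpa using h.const_add (-f 0), fun h => h.const_add (f 0)⟩

theorem summable_of_tendsto_sum_range_of_eventually_nonneg {f : ℕ → ℝ} {l : ℝ}
    (hf : Tendsto (fun N => ∑ i ∈ Finset.range N, f i) atTop (𝓝 l))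
    (hnonneg : ∀ᶠ n in atTop, 0 ≤ f n) : Summable f := by
  obtain ⟨k, hk⟩ := eventually_atTop.mp hnonneg
  rw [← summable_nat_add_iff k]
  have hshift : Tendsto (fun N => ∑ i ∈ Finset.range N, f (i + k)) atTop
      (𝓝 (l - ∑ i ∈ Finset.range k, f i)) := by
    refine ((hf.comp (tendsto_add_atTop_nat k)).sub_const _).congr fun N => ?_
    simp only [Function.comp_apply, Finset.sum_range_add_sub_sum_range, add_comm _ k]
  exact ((hasSum_iff_tendsto_nat_of_nonneg (fun i => hk _ (Nat.le_add_left k i)) _).mpr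
    hshift).summable

theorem summable_norm_of_tendsto_sum_range_of_eventually_norm_mul_le_re {f : ℕ → ℂ} {l u : ℂ}
    {c : ℝ} (hc : 0 < c) (hf : Tendsto (fun N => ∑ i ∈ Finset.range N, f i) atTop (𝓝 l))
    (hle : ∀ᶠ n in atTop, ‖f n‖ * c ≤ (u * f n).re) : Summable fun n => ‖f n‖ := by
  have hre : Tendsto (fun N => ∑ i ∈ Finset.range N, (u * f i).re) atTop (𝓝 (u * l).re) := by
    simpa only [Function.comp_def, Finset.mul_sum, Complex.re_sum] using
      (Complex.continuous_re.tendsto _).comp (hf.const_mul u)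
  have hsum := summable_of_tendsto_sum_range_of_eventually_nonneg hre
    (hle.mono fun n hn => (by positivity : 0 ≤ ‖f n‖ * c).trans hn)
  refine (hsum.mul_left c⁻¹).of_norm_bounded_eventually ?_
  rw [Nat.cofinite_eq_atTop]
  filter_upwards [hle] with n hn
  rw [norm_norm, le_inv_mul_iff₀ hc, mul_comm]
  exact hn

theorem ofReal_mul_mem_wedge {θ₁ θ₂ r : ℝ} {z : ℂ} (hr : 0 ≤ r) (hz : z ∈ Wedge θ₁ θ₂) :
    (r : ℂ) * z ∈ Wedge θ₁ θ₂ := by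
  obtain ⟨ρ, θ, hρ, hθ₁, hθ₂, rfl⟩ := hz
  exact ⟨r * ρ, θ, mul_nonneg hr hρ, hθ₁, hθ₂, by push_cast; ring⟩

theorem norm_mul_cos_le_re_of_mem_wedge {θ₁ θ₂ : ℝ} (h : θ₂ - θ₁ ≤ 2 * π) {z : ℂ}
    (hz : z ∈ Wedge θ₁ θ₂) :
    ‖z‖ * Real.cos ((θ₂ - θ₁) / 2) ≤ (exp (-(((θ₁ + θ₂) / 2 : ℝ) : ℂ) * I) * z).re := by
  obtain ⟨r, θ, hr, hθ₁, hθ₂, rfl⟩ := hz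
  have hrot : exp (-(((θ₁ + θ₂) / 2 : ℝ) : ℂ) * I) * (r * exp (θ * I))
      = r * exp (((θ - (θ₁ + θ₂) / 2 : ℝ) : ℂ) * I) := by
    rw [mul_left_comm, ← Complex.exp_add]
    push_cast
    ring_nf
  rw [hrot, re_ofReal_mul, exp_ofReal_mul_I_re, norm_mul, norm_exp_ofReal_mul_I, mul_one,
    Complex.norm_of_nonneg hr]
  gcongr
  rw [← Real.cos_abs (θ - _)]
  exact Real.cos_le_cos_of_nonneg_of_le_pi (abs_nonneg _) (by linarith)
    (abs_le.mpr ⟨by linarith, by linarith⟩)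

theorem dirichletConvAt_iff_exists_tendsto_sum_range {a : ℕ → ℂ} {s : ℂ} :
    DirichletConvAt a s ↔
      ∃ l, Tendsto (fun N => ∑ n ∈ Finset.range N, a n / (n : ℂ) ^ s) atTop (𝓝 l) := by
  refine ⟨fun ⟨l, hl⟩ => ⟨_, tendsto_sum_range_iff_tendsto_sum_Icc_one.mpr hl⟩,
    fun ⟨l, hl⟩ => ⟨l - a 0 / (0 : ℂ) ^ s, tendsto_sum_range_iff_tendsto_sum_Icc_one.mp ?_⟩⟩
  simpa using hl

theorem dirichletConvAt_of_summable_norm {a : ℕ → ℂ} {s : ℂ}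
    (h : Summable fun n : ℕ => ‖a n / (n : ℂ) ^ s‖) : DirichletConvAt a s :=
  dirichletConvAt_iff_exists_tendsto_sum_range.mpr ⟨_, h.of_norm.hasSum.tendsto_sum_nat⟩

theorem summable_norm_div_natCast_cpow_of_re_le {a : ℕ → ℂ} {s t : ℂ}
    (h : Summable fun n : ℕ => ‖a n / (n : ℂ) ^ s‖) (hst : s.re ≤ t.re) :
    Summable fun n : ℕ => ‖a n / (n : ℂ) ^ t‖ := by
  refine h.of_norm_bounded_eventually ?_
  rw [Nat.cofinite_eq_atTop]
  filter_upwards [eventually_gt_atTop 0] with n hn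
  rw [norm_norm, norm_div, norm_div, norm_natCast_cpow_of_pos hn, norm_natCast_cpow_of_pos hn]
  gcongr
  exact_mod_cast hn

theorem div_natCast_cpow_ofReal_mem_wedge {θ₁ θ₂ : ℝ} {z : ℂ} (hz : z ∈ Wedge θ₁ θ₂) (n : ℕ)
    (σ : ℝ) : z / (n : ℂ) ^ (σ : ℂ) ∈ Wedge θ₁ θ₂ := by
  rw [div_eq_inv_mul, ← ofReal_natCast, ← ofReal_cpow n.cast_nonneg, ← ofReal_inv]
  exact ofReal_mul_mem_wedge (by positivity) hz

theorem summable_norm_of_dirichletConvAt_of_eventually_mem_wedge {a : ℕ → ℂ} {θ₁ θ₂ σ : ℝ}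
    (h₁ : 0 ≤ θ₂ - θ₁) (h₂ : θ₂ - θ₁ < π) (hwedge : ∀ᶠ n in atTop, a n ∈ Wedge θ₁ θ₂)
    (hconv : DirichletConvAt a σ) : Summable fun n : ℕ => ‖a n / (n : ℂ) ^ (σ : ℂ)‖ := by
  obtain ⟨l, hl⟩ := dirichletConvAt_iff_exists_tendsto_sum_range.mp hconv
  have hcos : 0 < Real.cos ((θ₂ - θ₁) / 2) :=
    Real.cos_pos_of_mem_Ioo ⟨by linarith [pi_pos], by linarith⟩
  refine summable_norm_of_tendsto_sum_range_of_eventually_norm_mul_le_re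
    (u := exp (-(((θ₁ + θ₂) / 2 : ℝ) : ℂ) * I)) hcos hl ?_
  filter_upwards [hwedge] with n hn
  exact norm_mul_cos_le_re_of_mem_wedge (by linarith [pi_pos])
    (div_natCast_cpow_ofReal_mem_wedge hn n σ)

/-- If the coefficients `a n` eventually lie in a wedge of opening angle `< π`, then the
Dirichlet series `Σ a(n) n^{-s}` has equal abscissa of convergence and abscissa of absolute
convergence. -/
theorem abscissaConv_eq_abscissaAbsConv_of_wedge (a : ℕ → ℂ) (θ₁ θ₂ : ℝ)
    (h₁ : 0 ≤ θ₂ - θ₁) (h₂ : θ₂ - θ₁ < Real.pi)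
    (hwedge : ∀ᶠ n in atTop, a n ∈ Wedge θ₁ θ₂) :
    abscissaConv a = abscissaAbsConv a := by
  have hiff : ∀ σ : ℝ, (∀ s : ℂ, σ < s.re → DirichletConvAt a s) ↔
      ∀ s : ℂ, σ < s.re → Summable fun n : ℕ => ‖a n / (n : ℂ) ^ s‖ := by
    refine fun σ => ⟨fun hconv s hs => ?_,
      fun habs s hs => dirichletConvAt_of_summable_norm (habs s hs)⟩
    obtain ⟨σ', hσσ', hσ's⟩ := exists_between hs
    have habs := summable_norm_of_dirichletConvAt_of_eventually_mem_wedge h₁ h₂ hwedge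
      (hconv σ' (by simpa using hσσ'))
    exact summable_norm_div_natCast_cpow_of_re_le habs (by simpa using hσ's.le)
  simp only [abscissaConv, abscissaAbsConv, hiff]
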